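/- arXiv:2112.08108 — 3 statements merged into one kernel-verified Lean document; each statement's English description precedes it below -/
import Mathlib

section
/- Let (Q, S, μ) be a fuzzy skill multimap such that for each q ∈ Q and each C ∈ μ(q) there exists a molecule T with T ⊆ C and T ∈ μ(q), and let (Q, 𝒦) be the delineated knowledge structure. Then for every K ∈ 𝒦 and every q ∈ Q \ K, one has K ∪ {q} ∈ 𝒦 (i.e. q is in the outer fringe of K) if and only if there exists a molecule T ∈ μ(q) with p(T) \ K = {q}. -/
/-- A fuzzy set on a set `S` of skills: a function `S → [0,1]`, ordered pointwise. -/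
abbrev FuzzySet (S : Type*) := S → unitInterval

/-- The problem function induced by a fuzzy skill multimap `μ`:
`p(F) = {q | ∃ C ∈ μ(q), C ⊆ F}`. -/
def pfun {Q S : Type*} (μ : Q → Set (FuzzySet S)) (F : FuzzySet S) : Set Q :=
  {q | ∃ C ∈ μ q, C ≤ F}

/-- The knowledge structure delineated by a fuzzy skill multimap `μ`. -/
def delineated {Q S : Type*} (μ : Q → Set (FuzzySet S)) : Set (Set Q) :=
  Set.range (pfun μ)

/-- `𝒦_q = {K ∈ 𝒦 | q ∈ K}`. -/
def Kq {Q : Type*} (𝒦 : Set (Set Q)) (q : Q) : Set (Set Q) := {K ∈ 𝒦 | q ∈ K}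

/-- A knowledge structure is discriminative if `𝒦_q ≠ 𝒦_r` for distinct `q, r`. -/
def Discriminative {Q : Type*} (𝒦 : Set (Set Q)) : Prop :=
  ∀ q r : Q, q ≠ r → Kq 𝒦 q ≠ Kq 𝒦 r

/-- A knowledge structure is bi-discriminative if `𝒦_q ⊄ 𝒦_r` and `𝒦_r ⊄ 𝒦_q`
for distinct `q, r`. -/
def BiDiscriminative {Q : Type*} (𝒦 : Set (Set Q)) : Prop :=
  ∀ q r : Q, q ≠ r → ¬ Kq 𝒦 q ⊆ Kq 𝒦 r ∧ ¬ Kq 𝒦 r ⊆ Kq 𝒦 q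

/-- `μ` is a fuzzy skill multimap: each `μ(q)` is a nonempty family of nonzero fuzzy sets. -/
def FSM {Q S : Type*} (μ : Q → Set (FuzzySet S)) : Prop :=
  ∀ q, (μ q).Nonempty ∧ ∀ C ∈ μ q, C ≠ 0

/-- A molecule: a fuzzy set with exactly one skill of nonzero membership. -/
def Molecule {S : Type*} (T : FuzzySet S) : Prop := ∃! s, T s ≠ 0

/-- A knowledge space: a knowledge structure closed under unions of arbitrary subfamilies. -/
def IsKSpace {Q : Type*} (𝒦 : Set (Set Q)) : Prop :=
  ∅ ∈ 𝒦 ∧ Set.univ ∈ 𝒦 ∧ ∀ 𝒮 ⊆ 𝒦, ⋃₀ 𝒮 ∈ 𝒦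

/-
Under the molecule condition the problem function preserves binary joins: a competency
below `F ⊔ G` contains a molecule, and a molecule below `F ⊔ G` lies below `F` or below `G`,
since only one skill has to be compared. Hence if `K = p(F)` and `T` is a molecule with
`p(T) \ K = {q}`, then `p(F ⊔ T) = K ∪ {q}`. Conversely, if `K ∪ {q} = p(G)`, a molecule
`T ∈ μ(q)` below a competency of `q` contained in `G` has `q ∈ p(T) ⊆ K ∪ {q}`.
-/

def MoleculeCondition {Q S : Type*} (μ : Q → Set (FuzzySet S)) : Prop :=
  ∀ q, ∀ C ∈ μ q, ∃ T : FuzzySet S, Molecule T ∧ T ≤ C ∧ T ∈ μ q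

theorem pfun_mono {Q S : Type*} (μ : Q → Set (FuzzySet S)) : Monotone (pfun μ) :=
  fun _ _ hFG _ ⟨C, hC, hCF⟩ => ⟨C, hC, hCF.trans hFG⟩

theorem Molecule.le_iff_apply_le {S : Type*} {T : FuzzySet S} (hT : Molecule T) {s₀ : S}
    (hs₀ : T s₀ ≠ 0) (F : FuzzySet S) : T ≤ F ↔ T s₀ ≤ F s₀ := by
  refine ⟨fun h => h s₀, fun h s => ?_⟩
  by_cases hs : s = s₀
  · exact hs ▸ h
  · have hTs : T s = 0 := by
      by_contra hTs
      exact hs (hT.unique hTs hs₀)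
    exact hTs ▸ unitInterval.nonneg'

theorem Molecule.le_sup_iff {S : Type*} {T : FuzzySet S} (hT : Molecule T) {F G : FuzzySet S} :
    T ≤ F ⊔ G ↔ T ≤ F ∨ T ≤ G := by
  obtain ⟨s₀, hs₀, -⟩ := id hT
  simp only [hT.le_iff_apply_le hs₀, Pi.sup_apply, le_max_iff]

theorem pfun_sup {Q S : Type*} {μ : Q → Set (FuzzySet S)} (hmol : MoleculeCondition μ)
    (F G : FuzzySet S) : pfun μ (F ⊔ G) = pfun μ F ∪ pfun μ G := by
  refine subset_antisymm ?_
    (Set.union_subset (pfun_mono μ le_sup_left) (pfun_mono μ le_sup_right))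
  rintro r ⟨C, hC, hCFG⟩
  obtain ⟨T, hT, hTC, hTμ⟩ := hmol r C hC
  exact (hT.le_sup_iff.mp (hTC.trans hCFG)).imp (⟨T, hTμ, ·⟩) (⟨T, hTμ, ·⟩)

theorem union_singleton_mem_delineated {Q S : Type*} {μ : Q → Set (FuzzySet S)}
    (hmol : MoleculeCondition μ) {K : Set Q} (hK : K ∈ delineated μ) {q : Q} {T : FuzzySet S}
    (hT : pfun μ T \ K = {q}) : K ∪ {q} ∈ delineated μ := by
  obtain ⟨F, rfl⟩ := hK
  exact ⟨F ⊔ T, by rw [pfun_sup hmol, ← hT, Set.union_sdiff_self]⟩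

theorem exists_molecule_pfun_diff_eq {Q S : Type*} {μ : Q → Set (FuzzySet S)}
    (hmol : MoleculeCondition μ) {K : Set Q} {q : Q} (hq : q ∉ K)
    (hKq : K ∪ {q} ∈ delineated μ) : ∃ T ∈ μ q, Molecule T ∧ pfun μ T \ K = {q} := by
  obtain ⟨G, hG⟩ := hKq
  obtain ⟨C, hC, hCG⟩ : q ∈ pfun μ G := hG ▸ Set.mem_union_right K rfl
  obtain ⟨T, hT, hTC, hTμ⟩ := hmol q C hC
  have hpT : pfun μ T ⊆ K ∪ {q} := hG ▸ pfun_mono μ (hTC.trans hCG)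
  refine ⟨T, hTμ, hT, Set.Subset.antisymm ?_ ?_⟩
  · rwa [Set.sdiff_subset_iff]
  · exact Set.singleton_subset_iff.mpr ⟨⟨T, hTμ, le_rfl⟩, hq⟩

theorem stmt_7_general {Q S : Type*}
    (μ : Q → Set (FuzzySet S))
    (hmol : ∀ q, ∀ C ∈ μ q, ∃ T : FuzzySet S, Molecule T ∧ T ≤ C ∧ T ∈ μ q) :
    ∀ K ∈ delineated μ, ∀ q : Q, q ∉ K →
      (K ∪ {q} ∈ delineated μ ↔
        ∃ T ∈ μ q, Molecule T ∧ pfun μ T \ K = {q}) := by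
  intro K hK q hq
  exact ⟨exists_molecule_pfun_diff_eq hmol hq,
    fun ⟨_, _, _, hT⟩ => union_singleton_mem_delineated hmol hK hT⟩

/-- Under the molecule condition, for `K ∈ 𝒦` and `q ∈ Q \ K`, the item
`q` belongs to the outer fringe of `K` (i.e. `K ∪ {q} ∈ 𝒦`) iff there is a molecule
`T ∈ μ(q)` with `p(T) \ K = {q}`. -/
theorem stmt_7 {Q S : Type*} [Nonempty Q] [Nonempty S]
    (μ : Q → Set (FuzzySet S)) (hFSM : FSM μ)
    (hmol : ∀ q, ∀ C ∈ μ q, ∃ T : FuzzySet S, Molecule T ∧ T ≤ C ∧ T ∈ μ q) :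
    ∀ K ∈ delineated μ, ∀ q : Q, q ∉ K →
      (K ∪ {q} ∈ delineated μ ↔
        ∃ T ∈ μ q, Molecule T ∧ pfun μ T \ K = {q}) :=
  stmt_7_general μ hmol
end

section
/- Let (Q, S, μ) be a fuzzy skill multimap and (Q, 𝒦) the delineated knowledge structure. Then (Q, 𝒦) is bi-discriminative if and only if for any two distinct items q, r ∈ Q, both μ(q) ⋠ μ(r) and μ(r) ⋠ μ(q). -/
/-- `𝒰 ≼ 𝒱`: `𝒰` is refined by `𝒱`, i.e. every `U ∈ 𝒰` contains some `V ∈ 𝒱`. -/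
def Refines {S : Type*} (U V : Set (FuzzySet S)) : Prop :=
  ∀ C ∈ U, ∃ D ∈ V, D ≤ C

-- For `→`, test the inclusion on the state `p(C)` of a competency `C ∈ μ(q)`.
theorem Kq_delineated_subset_iff_refines {Q S : Type*} (μ : Q → Set (FuzzySet S)) (q r : Q) :
    Kq (delineated μ) q ⊆ Kq (delineated μ) r ↔ Refines (μ q) (μ r) := by
  constructor
  · intro h C hC
    obtain ⟨-, D, hD, hDC⟩ := h ⟨⟨C, rfl⟩, C, hC, le_rfl⟩
    exact ⟨D, hD, hDC⟩
  · rintro h K ⟨⟨F, rfl⟩, C, hC, hCF⟩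
    obtain ⟨D, hD, hDC⟩ := h C hC
    exact ⟨⟨F, rfl⟩, D, hD, hDC.trans hCF⟩

theorem stmt_14_general {Q S : Type*}
    (μ : Q → Set (FuzzySet S)) :
    BiDiscriminative (delineated μ) ↔
      ∀ q r : Q, q ≠ r → ¬ Refines (μ q) (μ r) ∧ ¬ Refines (μ r) (μ q) := by
  simp only [BiDiscriminative, Kq_delineated_subset_iff_refines]

/-- The delineated knowledge structure is bi-discriminative iff for all
distinct `q, r`, both `μ(q) ⋠ μ(r)` and `μ(r) ⋠ μ(q)`. -/
theorem stmt_14 {Q S : Type*} [Nonempty Q] [Nonempty S]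
    (μ : Q → Set (FuzzySet S)) (hFSM : FSM μ) :
    BiDiscriminative (delineated μ) ↔
      ∀ q r : Q, q ≠ r → ¬ Refines (μ q) (μ r) ∧ ¬ Refines (μ r) (μ q) :=
  stmt_14_general μ
end

section
/- Let {(Q_i, S_i, μ_i) : i ∈ I} be a family of fuzzy skill functions whose merge (Q, S, μ) is a distributed fuzzy skill function, let (Q, 𝒦) be the knowledge structure delineated by (Q, S, μ), and for each i ∈ I let (Q_i, 𝒦_i) be the knowledge structure delineated by (Q_i, S_i, μ_i). Suppose both families {Q_i : i ∈ I} and {S_i : i ∈ I} are pairwise disjoint. Then (Q, 𝒦) is discriminative if and only if every (Q_i, 𝒦_i) is discriminative, and (Q, 𝒦) is bi-discriminative if and only if every (Q_i, 𝒦_i) is bi-discriminative. -/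
/-! Items of different blocks are always separated: the state of the fuzzy set equal to `1` on
`S_i` and `0` elsewhere contains every item of `Q_i`, but no item of another block, since the
competencies of such an item are nonzero and live on skills disjoint from `S_i`. Within a block,
restricting a fuzzy set to `S_i` does not change which items of `Q_i` it masters, so `𝒦_i` is the
trace `{K ∩ Q_i | K ∈ 𝒦}`, and taking traces preserves the relation `𝒦_q ⊆ 𝒦_r` between items
of `Q_i`. -/

theorem Kq_subset_Kq_iff {Q : Type*} {𝒦 : Set (Set Q)} {q r : Q} :
    Kq 𝒦 q ⊆ Kq 𝒦 r ↔ ∀ K ∈ 𝒦, q ∈ K → r ∈ K :=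
  ⟨fun h _ hK hq => (h ⟨hK, hq⟩).2, fun h _ ⟨hK, hq⟩ => ⟨hK, h _ hK hq⟩⟩

theorem Kq_image_inter_subset_iff {Q : Type*} {𝒦 : Set (Set Q)} {A : Set Q} {q r : Q}
    (hq : q ∈ A) (hr : r ∈ A) :
    Kq ((· ∩ A) '' 𝒦) q ⊆ Kq ((· ∩ A) '' 𝒦) r ↔ Kq 𝒦 q ⊆ Kq 𝒦 r := by
  simp only [Kq_subset_Kq_iff, Set.forall_mem_image, Set.mem_inter_iff, hq, hr, and_true]

section Blocks

variable {ι Q : Type*} {𝒦 : Set (Set Q)} {Qi : ι → Set Q} {Ki : ι → Set (Set Q)}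

theorem discriminative_iff_of_blocks (hcover : ∀ q, ∃ i, q ∈ Qi i)
    (hblock : ∀ i, ∀ q ∈ Qi i, ∀ r ∈ Qi i, Kq 𝒦 q ⊆ Kq 𝒦 r ↔ Kq (Ki i) q ⊆ Kq (Ki i) r)
    (hsep : ∀ i j q r, q ∈ Qi i → r ∈ Qi j → Kq 𝒦 q ⊆ Kq 𝒦 r → i = j) :
    Discriminative 𝒦 ↔ ∀ i, ∀ q ∈ Qi i, ∀ r ∈ Qi i, q ≠ r → Kq (Ki i) q ≠ Kq (Ki i) r := by
  have hblock_eq : ∀ i, ∀ q ∈ Qi i, ∀ r ∈ Qi i,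
      Kq 𝒦 q = Kq 𝒦 r ↔ Kq (Ki i) q = Kq (Ki i) r := fun i q hq r hr => by
    rw [Set.Subset.antisymm_iff, Set.Subset.antisymm_iff, hblock i q hq r hr, hblock i r hr q hq]
  refine ⟨fun h i q hq r hr hqr => (hblock_eq i q hq r hr).not.mp (h q r hqr),
    fun h q r hqr hqr' => ?_⟩
  obtain ⟨i, hq⟩ := hcover q
  obtain ⟨j, hr⟩ := hcover r
  obtain rfl := hsep i j q r hq hr hqr'.subset
  exact h i q hq r hr hqr ((hblock_eq i q hq r hr).mp hqr')

theorem biDiscriminative_iff_of_blocks (hcover : ∀ q, ∃ i, q ∈ Qi i)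
    (hblock : ∀ i, ∀ q ∈ Qi i, ∀ r ∈ Qi i, Kq 𝒦 q ⊆ Kq 𝒦 r ↔ Kq (Ki i) q ⊆ Kq (Ki i) r)
    (hsep : ∀ i j q r, q ∈ Qi i → r ∈ Qi j → Kq 𝒦 q ⊆ Kq 𝒦 r → i = j) :
    BiDiscriminative 𝒦 ↔ ∀ i, ∀ q ∈ Qi i, ∀ r ∈ Qi i, q ≠ r →
      ¬ Kq (Ki i) q ⊆ Kq (Ki i) r ∧ ¬ Kq (Ki i) r ⊆ Kq (Ki i) q := by
  refine ⟨fun h i q hq r hr hqr => ?_, fun h q r hqr => ?_⟩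
  · rw [← hblock i q hq r hr, ← hblock i r hr q hq]
    exact h q r hqr
  obtain ⟨i, hq⟩ := hcover q
  obtain ⟨j, hr⟩ := hcover r
  by_cases hij : i = j
  · subst hij
    rw [hblock i q hq r hr, hblock i r hr q hq]
    exact h i q hq r hr hqr
  · exact ⟨fun hqr' => hij (hsep i j q r hq hr hqr'),
      fun hrq => hij (hsep j i r q hr hq hrq).symm⟩

end Blocks

section Fuzzy

variable {Q S : Type*} {μ : Q → Set (FuzzySet S)}

theorem le_indicator_iff {C F : FuzzySet S} {T : Set S} (hC : ∀ s ∉ T, C s = 0) :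
    C ≤ T.indicator F ↔ C ≤ F := by
  refine ⟨fun h s => (h s).trans (Set.indicator_apply_le' (fun _ => le_rfl)
    fun _ => unitInterval.nonneg'), fun h s => ?_⟩
  by_cases hs : s ∈ T
  · simpa [hs] using h s
  · simp [hs, hC s hs]

theorem pfun_indicator_inter (A : Set Q) {T : Set S}
    (hvanish : ∀ q ∈ A, ∀ C ∈ μ q, ∀ s ∉ T, C s = 0) (F : FuzzySet S) :
    pfun μ (T.indicator F) ∩ A = pfun μ F ∩ A := by
  ext q
  exact and_congr_left fun hq =>
    exists_congr fun C => and_congr_right fun hC => le_indicator_iff (hvanish q hq C hC)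

theorem image_pfun_inter_eq {A : Set Q} {T : Set S}
    (hvanish : ∀ q ∈ A, ∀ C ∈ μ q, ∀ s ∉ T, C s = 0) :
    (fun F => pfun μ F ∩ A) '' {F | ∀ s ∉ T, F s = 0} = (· ∩ A) '' delineated μ := by
  ext K
  constructor
  · rintro ⟨F, -, rfl⟩
    exact ⟨pfun μ F, ⟨F, rfl⟩, rfl⟩
  · rintro ⟨_, ⟨F, rfl⟩, rfl⟩
    exact ⟨T.indicator F, fun s hs => Set.indicator_of_notMem hs F,
      pfun_indicator_inter A hvanish F⟩

theorem not_Kq_delineated_subset {T : Set S} {q r : Q}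
    (hq : ∃ C ∈ μ q, ∀ s ∉ T, C s = 0) (hr : ∀ D ∈ μ r, D ≠ 0 ∧ ∀ s ∈ T, D s = 0) :
    ¬ Kq (delineated μ) q ⊆ Kq (delineated μ) r := by
  rw [Kq_subset_Kq_iff]
  intro h
  obtain ⟨C, hC, hCT⟩ := hq
  obtain ⟨D, hD, hDT⟩ := h _ ⟨T.indicator 1, rfl⟩
    ⟨C, hC, (le_indicator_iff hCT).mpr fun _ => unitInterval.le_one'⟩
  obtain ⟨hD0, hD_on_T⟩ := hr D hD
  refine hD0 (funext fun s => ?_)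
  by_cases hs : s ∈ T
  · exact hD_on_T s hs
  · exact le_antisymm ((hDT s).trans_eq (Set.indicator_of_notMem hs 1)) unitInterval.nonneg'

theorem sep_exists_le_eq_pfun_inter {A : Set Q} {ν : Q → Set (FuzzySet S)}
    (h : ∀ q ∈ A, μ q = ν q) (F : FuzzySet S) :
    {q ∈ A | ∃ C ∈ ν q, C ≤ F} = pfun μ F ∩ A := by
  ext q
  rw [Set.inter_comm]
  exact and_congr_right fun hq => by
    show _ ↔ ∃ C ∈ μ q, C ≤ F
    rw [h q hq]

theorem merge_eq_of_mem {ι : Type*} {Qi : ι → Set Q} {μi : ι → Q → Set (FuzzySet S)}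
    (hμ : ∀ q, μ q = {C | ∃ i, q ∈ Qi i ∧ C ∈ μi i q})
    (hQdisj : ∀ i j, i ≠ j → Disjoint (Qi i) (Qi j)) {i : ι} {q : Q} (hq : q ∈ Qi i) :
    μ q = μi i q := by
  rw [hμ]
  ext C
  refine ⟨fun ⟨j, hj, hC⟩ => ?_, fun hC => ⟨i, hq, hC⟩⟩
  obtain rfl : j = i := by
    by_contra hji
    exact Set.disjoint_left.mp (hQdisj j i hji) hj hq
  exact hC

end Fuzzy

theorem stmt_19_general {ι Q S : Type*}
    (Qi : ι → Set Q) (Si : ι → Set S)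
    (hQcover : ⋃ i, Qi i = Set.univ)
    (μi : ι → Q → Set (FuzzySet S))
    (hine : ∀ i, ∀ q ∈ Qi i, (μi i q).Nonempty)
    (hinz : ∀ i, ∀ q ∈ Qi i, ∀ C ∈ μi i q, C ≠ 0)
    (hvanish : ∀ i, ∀ q ∈ Qi i, ∀ C ∈ μi i q, ∀ s ∉ Si i, C s = 0)
    (μ : Q → Set (FuzzySet S))
    (hμ : ∀ q, μ q = {C | ∃ i, q ∈ Qi i ∧ C ∈ μi i q})
    (Ki : ι → Set (Set Q))
    (hKi : ∀ i, Ki i = (fun F => {q ∈ Qi i | ∃ C ∈ μi i q, C ≤ F}) ''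
      {F : FuzzySet S | ∀ s ∉ Si i, F s = 0})
    (hQdisj : ∀ i j, i ≠ j → Disjoint (Qi i) (Qi j))
    (hSdisj : ∀ i j, i ≠ j → Disjoint (Si i) (Si j)) :
    (Discriminative (delineated μ) ↔
      ∀ i, ∀ q ∈ Qi i, ∀ r ∈ Qi i, q ≠ r → Kq (Ki i) q ≠ Kq (Ki i) r) ∧
    (BiDiscriminative (delineated μ) ↔
      ∀ i, ∀ q ∈ Qi i, ∀ r ∈ Qi i, q ≠ r →
        ¬ Kq (Ki i) q ⊆ Kq (Ki i) r ∧ ¬ Kq (Ki i) r ⊆ Kq (Ki i) q) := by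
  have hμi : ∀ i, ∀ q ∈ Qi i, μ q = μi i q := fun i q hq => merge_eq_of_mem hμ hQdisj hq
  have hKi_trace : ∀ i, Ki i = (· ∩ Qi i) '' delineated μ := fun i => by
    rw [hKi, ← image_pfun_inter_eq fun q hq => hμi i q hq ▸ hvanish i q hq]
    exact Set.image_congr fun F _ => sep_exists_le_eq_pfun_inter (fun q hq => hμi i q hq) F
  have hblock : ∀ i, ∀ q ∈ Qi i, ∀ r ∈ Qi i, Kq (delineated μ) q ⊆ Kq (delineated μ) r ↔
      Kq (Ki i) q ⊆ Kq (Ki i) r := fun i q hq r hr => by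
    rw [hKi_trace i, Kq_image_inter_subset_iff hq hr]
  have hsep : ∀ i j q r, q ∈ Qi i → r ∈ Qi j →
      Kq (delineated μ) q ⊆ Kq (delineated μ) r → i = j := by
    intro i j q r hq hr hqr
    by_contra hij
    refine not_Kq_delineated_subset (T := Si i) ?_ (fun D hD => ?_) hqr
    · obtain ⟨C, hC⟩ := hine i q hq
      exact ⟨C, hμi i q hq ▸ hC, hvanish i q hq C hC⟩
    · rw [hμi j r hr] at hD
      exact ⟨hinz j r hr D hD, fun s hs =>
        hvanish j r hr D hD s (Set.disjoint_left.mp (hSdisj i j hij) hs)⟩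
  have hcover := Set.iUnion_eq_univ_iff.mp hQcover
  exact ⟨discriminative_iff_of_blocks hcover hblock hsep,
    biDiscriminative_iff_of_blocks hcover hblock hsep⟩

/-- For a family of fuzzy skill functions `(Q_i, S_i, μ_i)` whose merge
`(Q, S, μ)` is a distributed fuzzy skill function, if both the item domains `Q_i` and
the skill domains `S_i` are pairwise disjoint, then the global delineated structure is
discriminative (resp. bi-discriminative) iff every local delineated structure is
discriminative (resp. bi-discriminative). -/
theorem stmt_19 {ι Q S : Type*} [Nonempty Q] [Nonempty S]
    (Qi : ι → Set Q) (Si : ι → Set S)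
    (hQcover : ⋃ i, Qi i = Set.univ) (hScover : ⋃ i, Si i = Set.univ)
    (hQine : ∀ i, (Qi i).Nonempty) (hSine : ∀ i, (Si i).Nonempty)
    (μi : ι → Q → Set (FuzzySet S))
    (hine : ∀ i, ∀ q ∈ Qi i, (μi i q).Nonempty)
    (hinz : ∀ i, ∀ q ∈ Qi i, ∀ C ∈ μi i q, C ≠ 0)
    (hvanish : ∀ i, ∀ q ∈ Qi i, ∀ C ∈ μi i q, ∀ s ∉ Si i, C s = 0)
    (hincomp : ∀ i, ∀ q ∈ Qi i, ∀ C ∈ μi i q, ∀ D ∈ μi i q, C ≤ D → C = D)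
    (μ : Q → Set (FuzzySet S))
    (hμ : ∀ q, μ q = {C | ∃ i, q ∈ Qi i ∧ C ∈ μi i q})
    (hdistr : ∀ q, ∀ C ∈ μ q, ∀ D ∈ μ q, C ≤ D → C = D)
    (Ki : ι → Set (Set Q))
    (hKi : ∀ i, Ki i = (fun F => {q ∈ Qi i | ∃ C ∈ μi i q, C ≤ F}) ''
      {F : FuzzySet S | ∀ s ∉ Si i, F s = 0})
    (hQdisj : ∀ i j, i ≠ j → Disjoint (Qi i) (Qi j))
    (hSdisj : ∀ i j, i ≠ j → Disjoint (Si i) (Si j)) :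
    (Discriminative (delineated μ) ↔
      ∀ i, ∀ q ∈ Qi i, ∀ r ∈ Qi i, q ≠ r → Kq (Ki i) q ≠ Kq (Ki i) r) ∧
    (BiDiscriminative (delineated μ) ↔
      ∀ i, ∀ q ∈ Qi i, ∀ r ∈ Qi i, q ≠ r →
        ¬ Kq (Ki i) q ⊆ Kq (Ki i) r ∧ ¬ Kq (Ki i) r ⊆ Kq (Ki i) q) :=
  stmt_19_general Qi Si hQcover μi hine hinz hvanish μ hμ Ki hKi hQdisj hSdisj
end
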